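/- arXiv:2304.04036 — 3 statements merged into one kernel-verified Lean document; each statement's English description precedes it below -/
import Mathlib

section
/- For all w ∈ (0,1) and positive definite block matrix [[Σ_xx, Σ_xy],[Σ_xy^T, Σ_yy]], the block-diagonal matrix diag((1/w)Σ_xx, (1/(1-w))Σ_yy) minus the joint covariance matrix [[Σ_xx, Σ_xy],[Σ_xy^T, Σ_yy]] is positive semidefinite. -/
open Matrix

theorem covariance_intersection_consistency
    {n m : ℕ} (w : ℝ) (hw : w ∈ Set.Ioo (0 : ℝ) 1)
    (Sxx : Matrix (Fin n) (Fin n) ℝ) (Syy : Matrix (Fin m) (Fin m) ℝ)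
    (Sxy : Matrix (Fin n) (Fin m) ℝ)
    (hxx : Sxx.PosDef) (hyy : Syy.PosDef)
    (hjoint : (Matrix.fromBlocks Sxx Sxy Sxyᵀ Syy).PosDef) :
    (Matrix.fromBlocks ((1 / w) • Sxx) 0 0 ((1 / (1 - w)) • Syy)
      - Matrix.fromBlocks Sxx Sxy Sxyᵀ Syy).PosSemidef := by
  obtain ⟨hw0, hw1⟩ := hw
  have h1w : (0:ℝ) < 1 - w := by linarith
  set c := Real.sqrt ((1-w)/w) with hc
  set d := -Real.sqrt (w/(1-w)) with hd
  have hc2 : c * c = (1-w)/w := Real.mul_self_sqrt (by positivity)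
  have hd2 : d * d = w/(1-w) := by
    rw [hd, neg_mul_neg]; exact Real.mul_self_sqrt (by positivity)
  have hcd : c * d = -1 := by
    rw [hc, hd, mul_neg, ← Real.sqrt_mul (by positivity), div_mul_div_comm,
      mul_comm (1-w) w, div_self (by positivity)]
    simp
  have hdc : d * c = -1 := by rw [mul_comm]; exact hcd
  set D : Matrix (Fin n ⊕ Fin m) (Fin n ⊕ Fin m) ℝ :=
    Matrix.fromBlocks (c • 1) 0 0 (d • 1) with hD
  have key : (Matrix.fromBlocks ((1 / w) • Sxx) 0 0 ((1 / (1 - w)) • Syy)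
      - Matrix.fromBlocks Sxx Sxy Sxyᵀ Syy)
      = D * (Matrix.fromBlocks Sxx Sxy Sxyᵀ Syy) * Dᴴ := by
    rw [hD]
    simp only [conjTranspose_eq_transpose_of_trivial, Matrix.fromBlocks_transpose,
      Matrix.transpose_smul, Matrix.transpose_zero, Matrix.transpose_one,
      Matrix.fromBlocks_multiply, Matrix.smul_mul, Matrix.mul_smul, Matrix.one_mul,
      Matrix.mul_one, Matrix.zero_mul, Matrix.mul_zero, add_zero, zero_add,
      smul_smul, sub_eq_add_neg, Matrix.fromBlocks_neg, Matrix.fromBlocks_add, smul_zero, zero_add]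
    rw [hc2, hd2, hcd, hdc]
    have e1 : ((1:ℝ)/w) • Sxx + -Sxx = (((1-w)/w)) • Sxx := by
      rw [show -Sxx = (-1:ℝ) • Sxx by simp, ← add_smul]
      congr 1
      field_simp
      try ring
    have e2 : ((1:ℝ)/(1 + -w)) • Syy + -Syy = ((w/(1-w))) • Syy := by
      rw [show -Syy = (-1:ℝ) • Syy by simp, ← add_smul]
      congr 1
      rw [show (1:ℝ) + -w = 1 - w by ring]
      field_simp
      try ring
    rw [e1, e2, neg_one_smul, neg_one_smul]
  rw [key]
  exact hjoint.posSemidef.mul_mul_conjTranspose_same D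
end

section
/- With P₁, P₂, Ψ symmetric positive definite, K₁ = P₁(Ψ + P₁ + P₂)^{-1}, and x̂₁ = x̃₁ + K₁(x̃₂ - x̃₁), x̂₂ = x̃₂ + K₂(x̃₁ - x̃₂) with K₂ = P₂(Ψ + P₁ + P₂)^{-1}, the vector (x̂₁, x̂₂) solves the linear system (HᵀWH)x = HᵀWz, where H = [[I,0],[0,I],[I,-I]], W = diag(P₁^{-1}, P₂^{-1}, Ψ^{-1}), and z = (x̃₁, x̃₂, 0). -/
/-!
Write `S = Ψ + P₁ + P₂` and `d = x̃₁ - x̃₂`. The rows of `(HᵀWH) x̂ = HᵀWz` read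
`P₁⁻¹ x̂₁ + Ψ⁻¹ (x̂₁ - x̂₂) = P₁⁻¹ x̃₁` and `P₂⁻¹ x̂₂ + Ψ⁻¹ (x̂₂ - x̂₁) = P₂⁻¹ x̃₂`.
Since `I - K₁ - K₂ = (S - P₁ - P₂) S⁻¹ = Ψ S⁻¹`, we get `x̂₁ - x̂₂ = (I - K₁ - K₂) d = Ψ S⁻¹ d`,
so `Ψ⁻¹ (x̂₁ - x̂₂) = S⁻¹ d`, while `Pᵢ⁻¹ Kᵢ = S⁻¹` gives `P₁⁻¹ x̂₁ = P₁⁻¹ x̃₁ - S⁻¹ d` and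
`P₂⁻¹ x̂₂ = P₂⁻¹ x̃₂ + S⁻¹ d`; the `S⁻¹ d` terms cancel in both rows.
-/

open Matrix

namespace Matrix

variable {m R : Type*} [Fintype m] [DecidableEq m] [CommRing R]

theorem fromRows_one_fromCols_transpose_mul_fromBlocks_mul_mulVec (A B C : Matrix m m R)
    (u v : m → R) :
    ((fromRows (1 : Matrix (m ⊕ m) (m ⊕ m) R) (fromCols (1 : Matrix m m R) (-1)))ᵀ *
        fromBlocks (fromBlocks A 0 0 B) 0 0 C *
        fromRows (1 : Matrix (m ⊕ m) (m ⊕ m) R) (fromCols (1 : Matrix m m R) (-1))) *ᵥ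
      Sum.elim u v =
      Sum.elim (A *ᵥ u + C *ᵥ (u - v)) (B *ᵥ v + C *ᵥ (v - u)) := by
  rw [← neg_sub u v, mulVec_neg, Sum.elim_add_add]
  simp [← mulVec_mulVec, transpose_fromRows, transpose_fromCols, fromBlocks_mulVec,
    fromRows_mulVec, neg_mulVec, sub_eq_add_neg]

theorem fromRows_one_fromCols_transpose_mul_fromBlocks_mulVec (A B C : Matrix m m R)
    (a b : m → R) :
    ((fromRows (1 : Matrix (m ⊕ m) (m ⊕ m) R) (fromCols (1 : Matrix m m R) (-1)))ᵀ *
        fromBlocks (fromBlocks A 0 0 B) 0 0 C) *ᵥ Sum.elim (Sum.elim a b) 0 =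
      Sum.elim (A *ᵥ a) (B *ᵥ b) := by
  simp [← mulVec_mulVec, transpose_fromRows, transpose_fromCols, fromBlocks_mulVec]

theorem add_mulVec_sub_sub_add_mulVec_sub (K₁ K₂ : Matrix m m R) (x y : m → R) :
    (x + K₁ *ᵥ (y - x)) - (y + K₂ *ᵥ (x - y)) = (1 - K₁ - K₂) *ᵥ (x - y) := by
  rw [← neg_sub x y, mulVec_neg, sub_mulVec, sub_mulVec, one_mulVec]
  abel

theorem one_sub_mul_inv_sub_mul_inv {Ψ P₁ P₂ : Matrix m m R} (h : IsUnit (Ψ + P₁ + P₂).det) :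
    1 - P₁ * (Ψ + P₁ + P₂)⁻¹ - P₂ * (Ψ + P₁ + P₂)⁻¹ = Ψ * (Ψ + P₁ + P₂)⁻¹ := by
  rw [← mul_nonsing_inv _ h, ← sub_mul, ← sub_mul]
  congr 1
  abel

theorem nonsing_inv_mulVec_add_mul_mulVec {P : Matrix m m R} (hP : IsUnit P.det)
    (M : Matrix m m R) (x y : m → R) : P⁻¹ *ᵥ (x + (P * M) *ᵥ y) = P⁻¹ *ᵥ x + M *ᵥ y := by
  rw [mulVec_add, mulVec_mulVec, nonsing_inv_mul_cancel_left _ _ hP]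

end Matrix

theorem two_robot_fusion_solves_normal_equations
    {n : ℕ} (P₁ P₂ Ψ : Matrix (Fin n) (Fin n) ℝ)
    (hP₁ : P₁.PosDef) (hP₂ : P₂.PosDef) (hΨ : Ψ.PosDef)
    (xt1 xt2 : Fin n → ℝ)
    (K₁ K₂ : Matrix (Fin n) (Fin n) ℝ)
    (hK₁ : K₁ = P₁ * (Ψ + P₁ + P₂)⁻¹)
    (hK₂ : K₂ = P₂ * (Ψ + P₁ + P₂)⁻¹)
    (H : Matrix ((Fin n ⊕ Fin n) ⊕ Fin n) (Fin n ⊕ Fin n) ℝ)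
    (hH : H = Matrix.fromRows (1 : Matrix (Fin n ⊕ Fin n) (Fin n ⊕ Fin n) ℝ)
                (Matrix.fromCols (1 : Matrix (Fin n) (Fin n) ℝ)
                  (-(1 : Matrix (Fin n) (Fin n) ℝ))))
    (W : Matrix ((Fin n ⊕ Fin n) ⊕ Fin n) ((Fin n ⊕ Fin n) ⊕ Fin n) ℝ)
    (hW : W = Matrix.fromBlocks (Matrix.fromBlocks P₁⁻¹ 0 0 P₂⁻¹) 0 0 Ψ⁻¹)
    (z : ((Fin n ⊕ Fin n) ⊕ Fin n) → ℝ)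
    (hz : z = Sum.elim (Sum.elim xt1 xt2) 0)
    (xh : (Fin n ⊕ Fin n) → ℝ)
    (hxh : xh = Sum.elim (xt1 + K₁ *ᵥ (xt2 - xt1)) (xt2 + K₂ *ᵥ (xt1 - xt2))) :
    (Hᵀ * W * H) *ᵥ xh = (Hᵀ * W) *ᵥ z := by
  have hdet {P : Matrix (Fin n) (Fin n) ℝ} (hP : P.PosDef) : IsUnit P.det :=
    (isUnit_iff_isUnit_det P).1 hP.isUnit
  set S := Ψ + P₁ + P₂
  have hdiff : Ψ⁻¹ *ᵥ ((xt1 + K₁ *ᵥ (xt2 - xt1)) - (xt2 + K₂ *ᵥ (xt1 - xt2))) =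
      S⁻¹ *ᵥ (xt1 - xt2) := by
    rw [add_mulVec_sub_sub_add_mulVec_sub, hK₁, hK₂,
      one_sub_mul_inv_sub_mul_inv (hdet ((hΨ.add hP₁).add hP₂)), mulVec_mulVec,
      nonsing_inv_mul_cancel_left _ _ (hdet hΨ)]
  subst hH hW hz hxh hK₁ hK₂
  rw [fromRows_one_fromCols_transpose_mul_fromBlocks_mul_mulVec,
    fromRows_one_fromCols_transpose_mul_fromBlocks_mulVec, ← neg_sub (xt1 + _), mulVec_neg, hdiff,
    nonsing_inv_mulVec_add_mul_mulVec (hdet hP₁), nonsing_inv_mulVec_add_mul_mulVec (hdet hP₂),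
    ← neg_sub xt1 xt2, mulVec_neg, neg_add_cancel_right, add_neg_cancel_right]
end

section
/- Let H be the (K+1)-block lower bidiagonal-plus-measurement Jacobian H = [[-F₀, I, 0, …], …, […, -F_{K-1}, I], block-diag(-M₀, …, -M_K)] stacking dynamics rows -F_{k}x_k + x_{k+1} and measurement rows -M_k x_k. Then rank(H) equals rank of the stacked observability matrix 𝒪 = [M₀; M₁F₀; M₂F₁F₀; …; M_K F_{K-1}⋯F₀] plus nK, where n is the state dimension. In particular, H has full column rank n(K+1) if and only if 𝒪 has rank n. -/
open Matrix

/-- `Phi F k = F (k-1) * ⋯ * F 0` (decreasing index to the left), `Phi F 0 = 1`. -/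
def Phi {n : ℕ} (F : ℕ → Matrix (Fin n) (Fin n) ℝ) (k : ℕ) :
    Matrix (Fin n) (Fin n) ℝ :=
  (((List.range k).reverse).map F).prod

lemma Phi_zero {n : ℕ} (F : ℕ → Matrix (Fin n) (Fin n) ℝ) : Phi F 0 = 1 := by
  simp [Phi]

lemma Phi_succ {n : ℕ} (F : ℕ → Matrix (Fin n) (Fin n) ℝ) (m : ℕ) :
    Phi F (m + 1) = F m * Phi F m := by
  simp [Phi, List.range_succ]

theorem batch_jacobian_rank_eq_observability_rank
    {n K : ℕ} (F : ℕ → Matrix (Fin n) (Fin n) ℝ)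
    (p : ℕ → ℕ) (M : ∀ k : ℕ, Matrix (Fin (p k)) (Fin n) ℝ)
    (H : Matrix ((Fin K × Fin n) ⊕ ((k : Fin (K + 1)) × Fin (p k)))
      (Fin (K + 1) × Fin n) ℝ)
    (hH : ∀ (k : Fin K) (i : Fin n) (c : Fin (K + 1) × Fin n),
        H (Sum.inl (k, i)) c =
          if c.1 = k.castSucc then -(F k i c.2)
          else if c.1 = k.succ then (if i = c.2 then 1 else 0) else 0)
    (hH' : ∀ (k : Fin (K + 1)) (i : Fin (p k)) (c : Fin (K + 1) × Fin n),
        H (Sum.inr ⟨k, i⟩) c = if c.1 = k then -(M k i c.2) else 0)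
    (O : Matrix ((k : Fin (K + 1)) × Fin (p k)) (Fin n) ℝ)
    (hO : ∀ (k : Fin (K + 1)) (i : Fin (p k)) (j : Fin n),
        O ⟨k, i⟩ j = (M k * Phi F k) i j) :
    H.rank = O.rank + n * K ∧ (H.rank = n * (K + 1) ↔ O.rank = n) := by
  classical
  -- row formulas for H
  have rowl : ∀ (x : Fin (K + 1) × Fin n → ℝ) (k : Fin K) (i : Fin n),
      H.mulVecLin x (Sum.inl (k, i))
        = x (k.succ, i) - ∑ j, F k i j * x (k.castSucc, j) := by
    intro x k i
    have hne : (k.castSucc : Fin (K + 1)) ≠ k.succ := by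
      simp [Fin.ext_iff]
    simp only [mulVecLin_apply, mulVec, dotProduct, hH, Fintype.sum_prod_type,
      ite_mul, zero_mul, one_mul]
    have key : ∀ c1 : Fin (K + 1),
        (∑ c2, if c1 = k.castSucc then -(F k i c2) * x (c1, c2)
          else if c1 = k.succ then (if i = c2 then x (c1, c2) else 0) else 0)
        = (if c1 = k.castSucc then ∑ j, -(F k i j) * x (c1, j) else 0)
          + (if c1 = k.succ then x (c1, i) else 0) := by
      intro c1
      by_cases h1 : c1 = k.castSucc
      · simp [h1, hne]
      · by_cases h2 : c1 = k.succ
        · simp [h1, h2, Ne.symm hne]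
        · simp [h1, h2]
    rw [Finset.sum_congr rfl fun c1 _ => key c1, Finset.sum_add_distrib,
      Finset.sum_ite_eq', Finset.sum_ite_eq']
    simp [neg_mul, Finset.sum_neg_distrib]
    ring
  have rowr : ∀ (x : Fin (K + 1) × Fin n → ℝ) (k : Fin (K + 1)) (i : Fin (p k)),
      H.mulVecLin x (Sum.inr ⟨k, i⟩) = -∑ j, M k i j * x (k, j) := by
    intro x k i
    simp only [mulVecLin_apply, mulVec, dotProduct, hH', Fintype.sum_prod_type,
      ite_mul, zero_mul]
    have key : ∀ c1 : Fin (K + 1),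
        (∑ c2, if c1 = k then -(M k i c2) * x (c1, c2) else 0)
          = if c1 = k then ∑ c2, -(M k i c2) * x (c1, c2) else 0 := by
      intro c1; split_ifs <;> simp
    rw [Finset.sum_congr rfl fun c1 _ => key c1, Finset.sum_ite_eq']
    simp [neg_mul, Finset.sum_neg_distrib]
  -- the extension map
  set extd : (Fin n → ℝ) → (Fin (K + 1) × Fin n → ℝ) :=
    fun v c => (Phi F c.1 *ᵥ v) c.2 with hextd
  -- kernel elements of H have the shape `extd v0`
  have shape : ∀ x : Fin (K + 1) × Fin n → ℝ, H.mulVecLin x = 0 →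
      ∀ (k : Fin (K + 1)) (i : Fin n),
        x (k, i) = (Phi F (k : ℕ) *ᵥ fun j => x (0, j)) i := by
    intro x hx
    have main : ∀ m (hm : m < K + 1) (i : Fin n),
        x (⟨m, hm⟩, i) = (Phi F m *ᵥ fun j => x (0, j)) i := by
      intro m
      induction m with
      | zero => intro hm i; simp [Phi_zero, one_mulVec, show (⟨0, hm⟩ : Fin (K+1)) = 0 from rfl]
      | succ m ih =>
        intro hm i
        have hmK : m < K := by omega
        have h0 := congrFun hx (Sum.inl (⟨m, hmK⟩, i))
        rw [rowl] at h0
        have hsucc : (⟨m, hmK⟩ : Fin K).succ = (⟨m + 1, hm⟩ : Fin (K + 1)) := rfl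
        have hcast : (⟨m, hmK⟩ : Fin K).castSucc = (⟨m, by omega⟩ : Fin (K + 1)) := rfl
        rw [hsucc, hcast] at h0
        have h1 : x (⟨m + 1, hm⟩, i) = ∑ j, F m i j * x (⟨m, by omega⟩, j) := by
          have := sub_eq_zero.mp (by simpa using h0)
          simpa using this
        rw [h1, Phi_succ]
        simp only [mulVec, dotProduct, Matrix.mul_apply]
        rw [Finset.sum_congr rfl fun j _ => by rw [ih (by omega) j]]
        simp only [mulVec, dotProduct, Finset.mul_sum, Finset.sum_mul]
        rw [Finset.sum_comm]
        congr 1; ext l; congr 1; ext j; ring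
    intro k i
    have : k = ⟨(k : ℕ), k.isLt⟩ := rfl
    rw [this]; exact main k k.isLt i
  -- O rows via extd
  have hOrow : ∀ (v : Fin n → ℝ) (k : Fin (K + 1)) (i : Fin (p k)),
      O.mulVecLin v ⟨k, i⟩ = ∑ j, M k i j * extd v (k, j) := by
    intro v k i
    simp only [mulVecLin_apply, mulVec, dotProduct, hO, hextd, Matrix.mul_apply]
    simp only [Finset.sum_mul, Finset.mul_sum]
    rw [Finset.sum_comm]
    simp [mul_assoc]
  -- extension of a kernel element of O lies in ker H
  have ext_ker : ∀ v : Fin n → ℝ, O.mulVecLin v = 0 → H.mulVecLin (extd v) = 0 := by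
    intro v hv
    funext r
    rcases r with ⟨k, i⟩ | ⟨k, i⟩
    · rw [Pi.zero_apply, rowl]
      simp only [hextd]
      have h1 : ((k.succ : Fin (K + 1)) : ℕ) = (k : ℕ) + 1 := rfl
      have h2 : ((k.castSucc : Fin (K + 1)) : ℕ) = (k : ℕ) := rfl
      simp only [h1, h2, Phi_succ]
      simp only [mulVec, dotProduct, Matrix.mul_apply, Pi.zero_apply]
      rw [sub_eq_zero]
      simp only [Finset.mul_sum, Finset.sum_mul]
      rw [Finset.sum_comm]
      congr 1; ext l; congr 1; ext j; ring
    · have h0 : O.mulVecLin v ⟨k, i⟩ = 0 := by rw [hv]; rfl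
      rw [Pi.zero_apply, rowr, ← hOrow, h0, neg_zero]
  -- projection of a kernel element of H lies in ker O
  have proj_ker : ∀ x : Fin (K + 1) × Fin n → ℝ, H.mulVecLin x = 0 →
      O.mulVecLin (fun j => x (0, j)) = 0 := by
    intro x hx
    funext r
    rcases r with ⟨k, i⟩
    rw [Pi.zero_apply, hOrow]
    have h0 := congrFun hx (Sum.inr ⟨k, i⟩)
    rw [rowr] at h0
    have h1 : (∑ j, M k i j * extd (fun j => x (0, j)) (k, j))
        = ∑ j, M k i j * x (k, j) := by
      refine Finset.sum_congr rfl fun j _ => ?_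
      exact congrArg (fun t => M (↑k) i j * t) (shape x hx k j).symm
    rw [h1]
    have h2 : -∑ j, M k i j * x (k, j) = 0 := by simpa using h0
    linarith
  -- the kernels are linearly equivalent
  have e : (LinearMap.ker H.mulVecLin) ≃ₗ[ℝ] (LinearMap.ker O.mulVecLin) :=
    { toFun := fun x => ⟨fun j => x.1 (0, j),
        LinearMap.mem_ker.mpr (proj_ker x.1 (LinearMap.mem_ker.mp x.2))⟩
      map_add' := fun a b => rfl
      map_smul' := fun c a => rfl
      invFun := fun v => ⟨extd v.1,
        LinearMap.mem_ker.mpr (ext_ker v.1 (LinearMap.mem_ker.mp v.2))⟩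
      left_inv := fun x => Subtype.ext (funext fun c => by
        obtain ⟨k, i⟩ := c
        exact (shape x.1 (LinearMap.mem_ker.mp x.2) k i).symm)
      right_inv := fun v => Subtype.ext (funext fun j => by
        simp [hextd, show ((0 : Fin (K + 1)) : ℕ) = 0 from rfl, Phi_zero,
          one_mulVec]) }
  have hdim : Module.finrank ℝ (LinearMap.ker H.mulVecLin)
      = Module.finrank ℝ (LinearMap.ker O.mulVecLin) := e.finrank_eq
  have h1 := LinearMap.finrank_range_add_finrank_ker H.mulVecLin
  have h2 := LinearMap.finrank_range_add_finrank_ker O.mulVecLin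
  have hrH : H.rank = Module.finrank ℝ (LinearMap.range H.mulVecLin) := rfl
  have hrO : O.rank = Module.finrank ℝ (LinearMap.range O.mulVecLin) := rfl
  rw [Module.finrank_fintype_fun_eq_card] at h1 h2
  simp only [Fintype.card_prod, Fintype.card_fin] at h1 h2
  rw [← hrH, hdim] at h1
  rw [← hrO] at h2
  rw [show (K + 1) * n = n * K + n by ring] at h1
  rw [show n * (K + 1) = n * K + n by ring]
  constructor
  · omega
  · omega
end
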